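/- The restriction-of-jets map is an isomorphism of Hilbert spaces: the map R^{𝔟}_{𝔧} : ℋ^{𝔟}_{𝔧} → ⊕_{𝔦 ∈ ℕ^q, i¹≤b¹,…,i^q≤b^q} L²_{a,q+|𝔦|}(𝔹_{𝔧}) defined by f ↦ (∂^{|𝔦|} f/∂z_{j¹}^{i¹}⋯∂z_{j^q}^{i^q} restricted to 𝔹_{𝔧})_{𝔦} is a bounded bijective linear map of Hilbert spaces. -/
import Mathlib


open scoped ENNReal

noncomputable section

/-- The box `ℬ^𝔟_𝔧 ⊆ ℕ^m`. -/
def Box (m : ℕ) (J : Finset (Fin m)) (b : Fin m → ℕ) : Set (Fin m → ℕ) :=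
  {n | ∀ j ∈ J, n j ≤ b j}

/-- The weighted Bergman weight in dimension `d = card ι` with parameter `s`:
`ω_s(𝔫) = (∏ᵢ nᵢ!)·(d+s)!/(|𝔫|+s+d)!`, the squared norm of `z^𝔫` in `L²_{a,s}(𝔹^d)`. -/
def omegaW (ι : Type*) [Fintype ι] (s : ℕ) (n : ι → ℕ) : ℝ :=
  ((∏ i, (n i).factorial) * (Fintype.card ι + s).factorial : ℕ) /
    (((∑ i, n i) + s + Fintype.card ι).factorial : ℕ)

/-- `ℋ^𝔟_𝔧` in the coordinates of its orthonormal basis of normalized monomials. -/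
abbrev BoxSpace (m : ℕ) (J : Finset (Fin m)) (b : Fin m → ℕ) :=
  lp (fun _ : {n : Fin m → ℕ // n ∈ Box m J b} => ℂ) (2 : ℝ≥0∞)

/-- The matrix coefficient of the jet-restriction map `R^𝔟_𝔧` in the orthonormal bases:
the basis vector `z^𝔫/√ω₀(𝔫)` of `ℋ^𝔟_𝔧` is sent by
`f ↦ (∂^{|𝔦|}f/∂z_𝔧^𝔦 |_{𝔹_𝔧})_𝔦` (with `𝔦 = 𝔫|_J`, `ñ = 𝔫|_{Jᶜ}`, and the `𝔦`-component
landing in `L²_{a, q+|𝔦|}(𝔹_𝔧)`) to `(∏_{j∈J} 𝔫_j!)·√(ω_{q+|𝔦|}(ñ)/ω₀(𝔫))` times the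
normalized monomial `z^ñ/√ω_{q+|𝔦|}(ñ)` in the `𝔦`-th summand. -/
def jetCoef (m : ℕ) (J : Finset (Fin m)) (b : Fin m → ℕ)
    (n : {n : Fin m → ℕ // n ∈ Box m J b}) : ℝ :=
  (∏ j ∈ J, (n.1 j).factorial : ℕ) *
    Real.sqrt
      (omegaW {j : Fin m // j ∉ J} (J.card + ∑ j ∈ J, n.1 j) (fun j => n.1 j.1) /
        omegaW (Fin m) 0 n.1)

section Diag


variable {ι : Type*}

lemma diag_memℓp {w : ι → ℝ} {C : ℝ} (hC0 : 0 ≤ C) (hC : ∀ i, |w i| ≤ C)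
    (f : lp (fun _ : ι => ℂ) 2) : Memℓp (fun i => (w i : ℂ) * f i) 2 := by
  apply memℓp_gen
  have h2 : (0 : ℝ) < (2 : ℝ≥0∞).toReal := by norm_num
  have hf := (lp.memℓp f).summable h2
  refine Summable.of_nonneg_of_le (fun i => Real.rpow_nonneg (norm_nonneg _) _)
    (fun i => ?_) (hf.mul_left (C ^ (2 : ℝ≥0∞).toReal))
  have h1 : ‖(w i : ℂ) * f i‖ ≤ C * ‖f i‖ := by
    rw [norm_mul, Complex.norm_real, Real.norm_eq_abs]
    exact mul_le_mul_of_nonneg_right (hC i) (norm_nonneg _)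
  calc ‖(w i : ℂ) * f i‖ ^ (2 : ℝ≥0∞).toReal
      ≤ (C * ‖f i‖) ^ (2 : ℝ≥0∞).toReal :=
        Real.rpow_le_rpow (norm_nonneg _) h1 h2.le
    _ = C ^ (2 : ℝ≥0∞).toReal * ‖f i‖ ^ (2 : ℝ≥0∞).toReal :=
        Real.mul_rpow hC0 (norm_nonneg _)

/-- The diagonal operator on `ℓ²` with bounded real weights. -/
def diagCLM (w : ι → ℝ) (C : ℝ) (hC0 : 0 ≤ C) (hC : ∀ i, |w i| ≤ C) :
    lp (fun _ : ι => ℂ) 2 →L[ℂ] lp (fun _ : ι => ℂ) 2 :=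
  LinearMap.mkContinuous
    { toFun := fun f => ⟨fun i => (w i : ℂ) * f i, diag_memℓp hC0 hC f⟩
      map_add' := fun f g => lp.ext (funext fun i => by
        simp only [lp.coeFn_add, Pi.add_apply]
        exact mul_add _ _ _)
      map_smul' := fun c f => lp.ext (funext fun i => by
        simp only [lp.coeFn_smul, Pi.smul_apply, RingHom.id_apply, smul_eq_mul]
        ring) }
    C (fun f => by
      have h2 : (0 : ℝ) < (2 : ℝ≥0∞).toReal := by norm_num
      refine lp.norm_le_of_forall_sum_le h2 (mul_nonneg hC0 (norm_nonneg f)) (fun s => ?_)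
      have key : ∀ i, ‖(w i : ℂ) * f i‖ ^ (2 : ℝ≥0∞).toReal
          ≤ C ^ (2 : ℝ≥0∞).toReal * ‖f i‖ ^ (2 : ℝ≥0∞).toReal := by
        intro i
        have h1 : ‖(w i : ℂ) * f i‖ ≤ C * ‖f i‖ := by
          rw [norm_mul, Complex.norm_real, Real.norm_eq_abs]
          exact mul_le_mul_of_nonneg_right (hC i) (norm_nonneg _)
        calc ‖(w i : ℂ) * f i‖ ^ (2 : ℝ≥0∞).toReal
            ≤ (C * ‖f i‖) ^ (2 : ℝ≥0∞).toReal :=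
              Real.rpow_le_rpow (norm_nonneg _) h1 h2.le
          _ = _ := Real.mul_rpow hC0 (norm_nonneg _)
      calc ∑ i ∈ s, ‖(⟨fun i => (w i : ℂ) * f i, diag_memℓp hC0 hC f⟩ :
              lp (fun _ : ι => ℂ) 2) i‖ ^ (2 : ℝ≥0∞).toReal
          ≤ ∑ i ∈ s, C ^ (2 : ℝ≥0∞).toReal * ‖f i‖ ^ (2 : ℝ≥0∞).toReal :=
            Finset.sum_le_sum fun i _ => key i
        _ = C ^ (2 : ℝ≥0∞).toReal * ∑ i ∈ s, ‖f i‖ ^ (2 : ℝ≥0∞).toReal := by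
            rw [Finset.mul_sum]
        _ ≤ C ^ (2 : ℝ≥0∞).toReal * ‖f‖ ^ (2 : ℝ≥0∞).toReal := by
            refine mul_le_mul_of_nonneg_left ?_ (Real.rpow_nonneg hC0 _)
            exact lp.sum_rpow_le_norm_rpow h2 f s
        _ = (C * ‖f‖) ^ (2 : ℝ≥0∞).toReal :=
            (Real.mul_rpow hC0 (norm_nonneg f)).symm)

@[simp] lemma diagCLM_apply (w : ι → ℝ) (C : ℝ) (hC0 : 0 ≤ C) (hC : ∀ i, |w i| ≤ C)
    (f : lp (fun _ : ι => ℂ) 2) (i : ι) :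
    diagCLM w C hC0 hC f i = (w i : ℂ) * f i := rfl

end Diag

lemma jetCoef_eq (m : ℕ) (J : Finset (Fin m)) (b : Fin m → ℕ)
    (n : {n : Fin m → ℕ // n ∈ Box m J b}) :
    jetCoef m J b n =
      Real.sqrt (((∏ j ∈ J, (n.1 j).factorial) * (m + ∑ j ∈ J, n.1 j).factorial : ℕ) /
        (m.factorial : ℝ)) := by
  have hcard : Fintype.card {j : Fin m // j ∉ J} + J.card = m := by
    have h1 : Fintype.card {j : Fin m // j ∉ J}
        = Fintype.card (Fin m) - Fintype.card {j : Fin m // j ∈ J} :=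
      Fintype.card_subtype_compl _
    have h2 : Fintype.card {j : Fin m // j ∈ J} = J.card := Fintype.card_coe J
    have h3 : J.card ≤ m := by simpa using Finset.card_le_univ J
    simp only [h1, h2, Fintype.card_fin]
    omega
  have hsum : (∑ j : {j : Fin m // j ∉ J}, n.1 j.1) + (∑ j ∈ J, n.1 j) = ∑ j, n.1 j := by
    rw [← Finset.sum_subtype Jᶜ (fun x => Finset.mem_compl) n.1]
    exact Finset.sum_compl_add_sum J n.1
  have hprod : (∏ j : {j : Fin m // j ∉ J}, (n.1 j.1).factorial) *
      (∏ j ∈ J, (n.1 j).factorial) = ∏ j, (n.1 j).factorial := by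
    rw [← Finset.prod_subtype Jᶜ (fun x => Finset.mem_compl) (fun j => (n.1 j).factorial)]
    exact Finset.prod_compl_mul_prod J _
  set PJ := ∏ j ∈ J, (n.1 j).factorial with hPJ
  set SJ := ∑ j ∈ J, n.1 j with hSJ
  set Pc := ∏ j : {j : Fin m // j ∉ J}, (n.1 j.1).factorial with hPc
  set Sc := ∑ j : {j : Fin m // j ∉ J}, n.1 j.1 with hSc
  have e1 : Fintype.card {j : Fin m // j ∉ J} + (J.card + SJ) = m + SJ := by omega
  have e2 : Sc + (J.card + SJ) + Fintype.card {j : Fin m // j ∉ J} = (∑ j, n.1 j) + m := by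
    omega
  have hω : omegaW {j : Fin m // j ∉ J} (J.card + SJ) (fun j => n.1 j.1)
      = ((Pc * (m + SJ).factorial : ℕ) : ℝ) / (((∑ j, n.1 j) + m).factorial : ℝ) := by
    rw [omegaW, e1, e2]
  have hω0 : omegaW (Fin m) 0 n.1
      = (((Pc * PJ) * m.factorial : ℕ) : ℝ) / (((∑ j, n.1 j) + m).factorial : ℝ) := by
    rw [omegaW, hprod]
    simp
  rw [jetCoef, hω, hω0]
  have hfm : (0 : ℝ) < (m.factorial : ℝ) := by exact_mod_cast m.factorial_pos
  have hfS : (0 : ℝ) < (((∑ j, n.1 j) + m).factorial : ℝ) := by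
    exact_mod_cast Nat.factorial_pos _
  have hPJpos : (0 : ℝ) < (PJ : ℝ) := by
    exact_mod_cast Finset.prod_pos fun j _ => (n.1 j).factorial_pos
  have hPcpos : (0 : ℝ) < (Pc : ℝ) := by
    exact_mod_cast Finset.prod_pos fun j _ => Nat.factorial_pos _
  have harg : ((Pc * (m + SJ).factorial : ℕ) : ℝ) / (((∑ j, n.1 j) + m).factorial : ℝ) /
      ((((Pc * PJ) * m.factorial : ℕ) : ℝ) / (((∑ j, n.1 j) + m).factorial : ℝ))
      = ((m + SJ).factorial : ℝ) / ((PJ : ℝ) * (m.factorial : ℝ)) := by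
    push_cast
    field_simp
  rw [harg]
  have harg2 : ((PJ * (m + SJ).factorial : ℕ) : ℝ) / (m.factorial : ℝ)
      = (PJ : ℝ) ^ 2 * (((m + SJ).factorial : ℝ) / ((PJ : ℝ) * (m.factorial : ℝ))) := by
    push_cast
    field_simp
  rw [harg2, Real.sqrt_mul (sq_nonneg _), Real.sqrt_sq hPJpos.le]

lemma one_le_jetCoef (m : ℕ) (J : Finset (Fin m)) (b : Fin m → ℕ)
    (n : {n : Fin m → ℕ // n ∈ Box m J b}) : 1 ≤ jetCoef m J b n := by
  rw [jetCoef_eq]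
  rw [show (1 : ℝ) = Real.sqrt 1 from Real.sqrt_one.symm]
  apply Real.sqrt_le_sqrt
  rw [le_div_iff₀ (by exact_mod_cast m.factorial_pos)]
  have : m.factorial ≤ (∏ j ∈ J, (n.1 j).factorial) * (m + ∑ j ∈ J, n.1 j).factorial := by
    calc m.factorial ≤ (m + ∑ j ∈ J, n.1 j).factorial :=
          Nat.factorial_le (Nat.le_add_right _ _)
      _ ≤ _ := Nat.le_mul_of_pos_left _ (Finset.prod_pos fun j _ => Nat.factorial_pos _)
  calc (1:ℝ) * m.factorial = (m.factorial : ℝ) := one_mul _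
    _ ≤ _ := by exact_mod_cast this

lemma jetCoef_le (m : ℕ) (J : Finset (Fin m)) (b : Fin m → ℕ)
    (n : {n : Fin m → ℕ // n ∈ Box m J b}) :
    jetCoef m J b n ≤
      Real.sqrt (((∏ j ∈ J, (b j).factorial) * (m + ∑ j ∈ J, b j).factorial : ℕ) /
        (m.factorial : ℝ)) := by
  rw [jetCoef_eq]
  apply Real.sqrt_le_sqrt
  apply div_le_div_of_nonneg_right ?_ (by positivity)
  have hb : (∏ j ∈ J, (n.1 j).factorial) * (m + ∑ j ∈ J, n.1 j).factorial ≤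
      (∏ j ∈ J, (b j).factorial) * (m + ∑ j ∈ J, b j).factorial := by
    apply Nat.mul_le_mul
    · exact Finset.prod_le_prod' fun j hj => Nat.factorial_le (n.2 j hj)
    · exact Nat.factorial_le (by
        have := Finset.sum_le_sum fun j (hj : j ∈ J) => n.2 j hj
        omega)
  exact_mod_cast hb

/-- the jet-restriction map
`R^𝔟_𝔧 : ℋ^𝔟_𝔧 → ⊕_{𝔦 ≤ 𝔟} L²_{a, q+|𝔦|}(𝔹_𝔧)` is a bounded bijective linear map of
Hilbert spaces.  Identifying both sides with `ℓ²` of the box via their orthonormal bases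
of normalized monomials (the pairs `(𝔦, ñ)` with `𝔦 ≤ 𝔟` correspond exactly to the
elements of the box), `R^𝔟_𝔧` is the diagonal map with entries `jetCoef`, and the claim
is that this map exists as a bounded operator and is bijective. -/
theorem jet_restriction_isomorphism (m : ℕ) (J : Finset (Fin m)) (b : Fin m → ℕ) :
    ∃ R : BoxSpace m J b →L[ℂ] BoxSpace m J b,
      (∀ n : {n : Fin m → ℕ // n ∈ Box m J b},
        R (lp.single 2 n 1) = (jetCoef m J b n : ℂ) • lp.single 2 n 1) ∧
      Function.Bijective R := by
  set K := Real.sqrt (((∏ j ∈ J, (b j).factorial) * (m + ∑ j ∈ J, b j).factorial : ℕ) /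
    (m.factorial : ℝ)) with hK
  have hw1 : ∀ n, 1 ≤ jetCoef m J b n := one_le_jetCoef m J b
  have hwpos : ∀ n, 0 < jetCoef m J b n := fun n => lt_of_lt_of_le one_pos (hw1 n)
  have hK0 : (0 : ℝ) ≤ K := Real.sqrt_nonneg _
  have hCb : ∀ n, |jetCoef m J b n| ≤ K := fun n => by
    rw [abs_of_nonneg (hwpos n).le]; exact jetCoef_le m J b n
  have hCb' : ∀ n, |(jetCoef m J b n)⁻¹| ≤ 1 := fun n => by
    rw [abs_of_nonneg (inv_nonneg.mpr (hwpos n).le)]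
    exact inv_le_one_of_one_le₀ (hw1 n)
  refine ⟨diagCLM (jetCoef m J b) K hK0 hCb, fun n => ?_, ?_⟩
  · apply lp.ext
    funext i
    have hsm : (((jetCoef m J b n : ℂ) • (lp.single 2 n 1 : BoxSpace m J b)) : ∀ _, ℂ) i
        = (jetCoef m J b n : ℂ) * ((lp.single 2 n 1 : BoxSpace m J b) : ∀ _, ℂ) i := by
      rw [lp.coeFn_smul]; rfl
    rw [diagCLM_apply, hsm]
    by_cases h : i = n
    · subst h; rfl
    · rw [lp.single_apply_ne 2 n _ h, mul_zero, mul_zero]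
  · have hli : Function.LeftInverse
        (diagCLM (fun n => (jetCoef m J b n)⁻¹) 1 zero_le_one hCb')
        (diagCLM (jetCoef m J b) K hK0 hCb) := by
      intro f
      apply lp.ext
      funext i
      rw [diagCLM_apply, diagCLM_apply]
      push_cast
      rw [← mul_assoc, inv_mul_cancel₀ (by exact_mod_cast (hwpos i).ne'), one_mul]
    have hri : Function.RightInverse
        (diagCLM (fun n => (jetCoef m J b n)⁻¹) 1 zero_le_one hCb')
        (diagCLM (jetCoef m J b) K hK0 hCb) := by
      intro f
      apply lp.ext
      funext i
      rw [diagCLM_apply, diagCLM_apply]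
      push_cast
      rw [← mul_assoc, mul_inv_cancel₀ (by exact_mod_cast (hwpos i).ne'), one_mul]
    exact ⟨hli.injective, hri.surjective⟩
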